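/- arXiv:0909.5342 — 3 statements merged into one kernel-verified Lean document; each statement's English description precedes it below -/
import Mathlib

section
/- Let ψ : ℝ → ℝ be continuous and strictly increasing on [0,∞) with ψ(0) = 0 and ψ mapping [0,∞) onto [0,∞), and let φ denote the inverse of ψ on [0,∞). For u > 0 define φ*(u) := sup_{t>0} (u·t − φ(t)), assumed finite. Then for any x, y > 0, setting δ := φ*(2x/y), one has x·ψ(δ) ≤ y·δ. -/
/-- the "convex trick" lemma. If ψ is continuous and strictly
increasing on [0,∞) with ψ 0 = 0, mapping [0,∞) onto [0,∞), φ its inverse on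
[0,∞), and δ is the (finite) value of the convex conjugate
φ*(2x/y) = sup_{t>0}(2x/y·t − φ t), then x·ψ(δ) ≤ y·δ. -/
theorem stmt_0 (ψ φ : ℝ → ℝ)
    (hcont : ContinuousOn ψ (Set.Ici 0))
    (hmono : StrictMonoOn ψ (Set.Ici 0))
    (h0 : ψ 0 = 0)
    (hsurj : Set.SurjOn ψ (Set.Ici 0) (Set.Ici 0))
    (hinv1 : ∀ t ∈ Set.Ici (0 : ℝ), φ (ψ t) = t)
    (hinv2 : ∀ u ∈ Set.Ici (0 : ℝ), ψ (φ u) = u)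
    (x y δ : ℝ) (hx : 0 < x) (hy : 0 < y)
    (hδ : IsLUB {z : ℝ | ∃ t > 0, z = (2 * x / y) * t - φ t} δ) :
    x * ψ δ ≤ y * δ := by
  have hψpos : ∀ ε : ℝ, 0 < ε → 0 < ψ ε := by
    intro ε hε
    have := hmono (Set.self_mem_Ici) (le_of_lt hε : (0:ℝ) ≤ ε) hε
    rwa [h0] at this
  have hub := hδ.1
  -- δ ≥ 0
  have hδ0 : 0 ≤ δ := by
    by_contra h
    push_neg at h
    have hε : (0:ℝ) < -δ := by linarith
    have hmem : (2 * x / y) * ψ (-δ) - φ (ψ (-δ)) ∈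
        {z : ℝ | ∃ t > 0, z = (2 * x / y) * t - φ t} :=
      ⟨ψ (-δ), hψpos _ hε, rfl⟩
    have hle := hub hmem
    rw [hinv1 (-δ) (le_of_lt hε)] at hle
    have hu : (0:ℝ) < 2 * x / y := by positivity
    nlinarith [hψpos _ hε, mul_pos hu (hψpos _ hε)]
  rcases eq_or_lt_of_le hδ0 with h | h
  · rw [← h, h0]; simp
  · have hmem : (2 * x / y) * ψ δ - φ (ψ δ) ∈
        {z : ℝ | ∃ t > 0, z = (2 * x / y) * t - φ t} :=
      ⟨ψ δ, hψpos _ h, rfl⟩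
    have hle := hub hmem
    rw [hinv1 δ (le_of_lt h)] at hle
    -- (2x/y) ψδ - δ ≤ δ
    have key : y * (2 * x / y * ψ δ) = 2 * x * ψ δ := by
      field_simp
    have hmul := mul_le_mul_of_nonneg_left hle hy.le
    rw [mul_sub, key] at hmul
    linarith
end

section
/- For every real x ≥ 0, (1+x)·log(1+x) − x ≥ x + 1 − √(1+2x). -/
open Real

lemma three_mul_add_two_div_le_sqrt {x : ℝ} (hx : 0 ≤ x) :
    (3 * x + 2) / (x + 2) ≤ √(1 + 2 * x) := by
  rw [Real.le_sqrt (by positivity) (by positivity), div_pow, div_le_iff₀ (by positivity)]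
  -- `(1 + 2x)(x + 2)² - (3x + 2)² = 2x³`
  nlinarith [pow_nonneg hx 3]

/-- the Bennett function g(x) = (1+x)log(1+x) − x dominates
g₂(x) = x + 1 − √(1+2x) on [0,∞). -/
theorem stmt_3 (x : ℝ) (hx : 0 ≤ x) :
    (1 + x) * Real.log (1 + x) - x ≥ x + 1 - Real.sqrt (1 + 2 * x) := by
  calc x + 1 - √(1 + 2 * x) ≤ x + 1 - (3 * x + 2) / (x + 2) := by
        linarith [three_mul_add_two_div_le_sqrt hx]
    _ = x ^ 2 / (x + 2) := by field_simp; ring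
    _ = (1 + x) * (2 * x / (x + 2)) - x := by field_simp; ring
    _ ≤ (1 + x) * log (1 + x) - x := by
        gcongr
        exact le_log_one_add_of_nonneg hx
end

section
/- Let A be a nonempty set, α⋆ ∈ A, and R, Rₙ : A → ℝ with R(α) ≥ 0 for all α ∈ A and R(α⋆) = 0, Rₙ(α⋆) = 0. Let ψ : ℝ → ℝ be continuous and strictly increasing on [0,∞) with ψ(0) = 0 and ψ mapping [0,∞) onto [0,∞), such that δ ↦ ψ(δ)/δ is nonincreasing on (0,∞); let φ be the inverse of ψ on [0,∞) and φ*(u) := sup_{t>0}(u·t − φ(t)). Fix c > 0, q > 1, δ_min > 0, ε > 0, ρ ≥ 0, and assume: (i) for every δ ≥ δ_min and every α ∈ A with R(α) ≤ δ, one has R(α) − Rₙ(α) ≤ c·ψ(δ); (ii) α̂ ∈ A satisfies Rₙ(α̂) ≤ ρ + inf_{α∈A} Rₙ(α); (iii) φ*(2q(1+ε)c/ε) is finite. Then, with δ* := max( φ*(2q(1+ε)c/ε), δ_min ), one has R(α̂) ≤ (1+ε)·ρ + ε·δ*. -/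
/-- deterministic core of the peeling argument for
ρ-empirical-risk-minimization. -/
theorem stmt_15 {A : Type*} (αstar : A) (R Rn : A → ℝ)
    (hR0 : ∀ a, 0 ≤ R a) (hRstar : R αstar = 0) (hRnstar : Rn αstar = 0)
    (ψ φ : ℝ → ℝ)
    (hcont : ContinuousOn ψ (Set.Ici 0))
    (hmono : StrictMonoOn ψ (Set.Ici 0))
    (h0 : ψ 0 = 0)
    (hsurj : Set.SurjOn ψ (Set.Ici 0) (Set.Ici 0))
    (hinv1 : ∀ t ∈ Set.Ici (0 : ℝ), φ (ψ t) = t)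
    (hinv2 : ∀ u ∈ Set.Ici (0 : ℝ), ψ (φ u) = u)
    (hratio : AntitoneOn (fun δ => ψ δ / δ) (Set.Ioi 0))
    (c q δmin ε ρ : ℝ)
    (hc : 0 < c) (hq : 1 < q) (hδmin : 0 < δmin) (hε : 0 < ε) (hρ : 0 ≤ ρ)
    (hconc : ∀ δ ≥ δmin, ∀ a, R a ≤ δ → R a - Rn a ≤ c * ψ δ)
    (αhat : A) (hERM : ∀ a, Rn αhat ≤ ρ + Rn a)
    (δ0 : ℝ)
    (hδ0 : IsLUB {z : ℝ | ∃ t > 0, z = (2 * q * (1 + ε) * c / ε) * t - φ t} δ0) :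
    R αhat ≤ (1 + ε) * ρ + ε * max δ0 δmin := by
  have hq0 : (0:ℝ) < q := lt_trans one_pos hq
  set δs := max δ0 δmin with hδsdef
  clear_value δs
  have hδminδs : δmin ≤ δs := by rw [hδsdef]; exact le_max_right _ _
  have hδ0δs : δ0 ≤ δs := by rw [hδsdef]; exact le_max_left _ _
  have hδs0 : 0 < δs := lt_of_lt_of_le hδmin hδminδs
  have hψδs : 0 < ψ δs := by
    have := hmono (Set.mem_Ici.mpr le_rfl) (Set.mem_Ici.mpr hδs0.le) hδs0
    rwa [h0] at this
  have hmem : (2 * q * (1 + ε) * c / ε) * ψ δs - φ (ψ δs)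
      ∈ {z : ℝ | ∃ t > 0, z = (2 * q * (1 + ε) * c / ε) * t - φ t} :=
    ⟨ψ δs, hψδs, rfl⟩
  have h1 : (2 * q * (1 + ε) * c / ε) * ψ δs - δs ≤ δ0 := by
    have := hδ0.1 hmem
    rwa [hinv1 δs (Set.mem_Ici.mpr hδs0.le)] at this
  have h2 : (2 * q * (1 + ε) * c / ε) * ψ δs ≤ 2 * δs := by linarith
  -- turn into multiplicative form
  have h2' : 2 * q * (1 + ε) * c * ψ δs ≤ 2 * δs * ε := by
    rw [div_mul_eq_mul_div, div_le_iff₀ hε] at h2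
    linarith
  obtain ⟨δ, hδdef⟩ : ∃ d : ℝ, d = max (R αhat) δs := ⟨_, rfl⟩
  have hδsδ : δs ≤ δ := by rw [hδdef]; exact le_max_right _ _
  have hRδ : R αhat ≤ δ := by rw [hδdef]; exact le_max_left _ _
  have hδpos : 0 < δ := lt_of_lt_of_le hδs0 hδsδ
  have hconc' : R αhat - Rn αhat ≤ c * ψ δ :=
    hconc δ (le_trans hδminδs hδsδ) αhat hRδ
  have hRn : Rn αhat ≤ ρ := by
    have := hERM αstar
    rwa [hRnstar, add_zero] at this
  have hRhat : R αhat ≤ ρ + c * ψ δ := by linarith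
  have hratio' : ψ δ / δ ≤ ψ δs / δs :=
    hratio (Set.mem_Ioi.mpr hδs0) (Set.mem_Ioi.mpr hδpos) hδsδ
  have hratio'' : ψ δ * δs ≤ ψ δs * δ := by
    rw [div_le_div_iff₀ hδpos hδs0] at hratio'
    linarith
  -- key bound: 2 q (1+ε) c ψ(δ) ≤ 2 δ ε
  have hmain : 2 * q * (1 + ε) * c * ψ δ ≤ 2 * δ * ε := by
    have hcoef : (0:ℝ) < 2 * q * (1 + ε) * c := by positivity
    have t1 : 2 * q * (1 + ε) * c * (ψ δ * δs) ≤ 2 * q * (1 + ε) * c * (ψ δs * δ) :=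
      mul_le_mul_of_nonneg_left hratio'' hcoef.le
    have t2 : (2 * q * (1 + ε) * c * ψ δs) * δ ≤ (2 * δs * ε) * δ :=
      mul_le_mul_of_nonneg_right h2' hδpos.le
    have t3 : (2 * q * (1 + ε) * c * ψ δ) * δs ≤ (2 * δ * ε) * δs := by
      linarith only [t1, t2]
    exact le_of_mul_le_mul_right t3 hδs0
  rcases le_total (R αhat) δs with h | h
  · have hδeq : δ = δs := hδdef.trans (max_eq_right h)
    rw [hδeq] at hmain hRhat
    have hcψ : 0 ≤ c * ψ δs := (mul_pos hc hψδs).le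
    have hcoef2 : (0:ℝ) ≤ 2 * q * (1 + ε) - 2 := by
      linarith only [hq, mul_pos hq0 hε]
    have : 2 * (c * ψ δs) ≤ 2 * δs * ε := by
      linarith only [mul_nonneg hcoef2 hcψ, hmain]
    linarith only [hRhat, this, mul_nonneg hε.le hρ]
  · have hδeq : δ = R αhat := hδdef.trans (max_eq_left h)
    rw [hδeq] at hmain hRhat
    have hpos : 0 < q * (1 + ε) - ε := by
      linarith only [hq0, hε, mul_nonneg (sub_nonneg.mpr hq.le) hε.le]
    have hA : (q * (1 + ε) - ε) * R αhat ≤ q * (1 + ε) * ρ := by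
      have hm := mul_le_mul_of_nonneg_left hRhat
        (show (0:ℝ) ≤ q * (1 + ε) by positivity)
      linarith only [hm, hmain]
    have hprod : 0 ≤ ρ * ((1 + ε) * (ε * (q - 1))) :=
      mul_nonneg hρ (mul_nonneg (by linarith) (mul_nonneg hε.le (by linarith)))
    have hkey : (q * (1 + ε) - ε) * ((1 + ε) * ρ) - q * (1 + ε) * ρ
        = ρ * ((1 + ε) * (ε * (q - 1))) := by ring
    have hB : (q * (1 + ε) - ε) * R αhat ≤ (q * (1 + ε) - ε) * ((1 + ε) * ρ) := by
      linarith
    have hC : R αhat ≤ (1 + ε) * ρ := le_of_mul_le_mul_left hB hpos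
    linarith only [hC, mul_pos hε hδs0]
end
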